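/- Let A be a central hyperplane arrangement in V = K^ℓ and H0 ∈ A. Then for every k, L_k(d_{H0}A) is the disjoint union of the fibers ρ^{-1}(X) over X ∈ L_k(A^{H0}), and consequently b_k(d_{H0}A) = Σ_{X ∈ L_k(A^{H0})} b_k(d_{H0}(A_X)), where for X ∈ L_k(A^{H0}) ⊆ L_{k+1}(A), d_{H0}(A_X) denotes the deconing with respect to H0 of the central arrangement A_X = {H ∈ A : H ⊇ X}. -/

import Mathlib

/- Common definitions: hyperplane arrangements, intersection lattices, Möbius
functions, Betti numbers, characteristic polynomials, deconing, Ziegler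
restriction, and freeness of (multi)arrangements. -/

open Module

noncomputable section
namespace ArrPaper

open scoped Classical

/-- The Möbius function of a finite poset `L` (the intersection lattice of an
arrangement, ordered by *reverse inclusion*): elements with no strict upper bound in
the ambient order (i.e. the bottom `V` of the reverse-inclusion order) get value `1`,
and `μ(X) = -∑_{Y > X} μ(Y)` otherwise, so that `∑_{Y ≤ X} μ(Y) = 0` for `X > V`. -/
def posetMobius {α : Type*} [PartialOrder α] (L : Finset α) (x : α) : ℤ :=
  if (L.filter (fun y => x < y)).Nonempty then
    - ∑ y ∈ (L.filter (fun y => x < y)).attach, posetMobius L y.1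
  else 1
termination_by (L.filter (fun y => x < y)).card
decreasing_by
  have hy := y.2
  simp only [Finset.mem_filter] at hy
  apply Finset.card_lt_card
  constructor
  · intro z hz
    simp only [Finset.mem_filter] at hz ⊢
    exact ⟨hz.1, lt_trans hy.2 hz.2⟩
  · intro hsub
    have := hsub (Finset.mem_filter.2 ⟨hy.1, hy.2⟩)
    simp only [Finset.mem_filter] at this
    exact lt_irrefl _ this.2

variable {K V : Type*} [Field K] [AddCommGroup V] [Module K V]

/-- `H` is a linear hyperplane: the kernel of a nonzero linear form. -/
def IsLinHyp (H : Submodule K V) : Prop :=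
  ∃ φ : V →ₗ[K] K, φ ≠ 0 ∧ LinearMap.ker φ = H

/-- The intersection lattice (as a `Finset`) of a finite collection `B` of linear
subspaces, inside the ambient subspace `E`: all intersections of subfamilies of `B`
with `E` (the empty intersection giving `E` itself). -/
def LFinsetIn (E : Submodule K V) (B : Finset (Submodule K V)) : Finset (Submodule K V) :=
  B.powerset.image (fun s => (s.inf id) ⊓ E)

/-- The `k`-th Betti number of a central arrangement `B` with ambient space `E`:
`(-1)^k` times the sum of the Möbius values over the codimension-`k` elements of the
intersection lattice. -/
def cBetti (E : Submodule K V) (B : Finset (Submodule K V)) (k : ℕ) : ℤ :=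
  (-1 : ℤ) ^ k *
    ∑ X ∈ (LFinsetIn E B).filter
        (fun X : Submodule K V => finrank K ↥E - finrank K ↥X = k),
      posetMobius (LFinsetIn E B) X

/-- The characteristic polynomial `χ(B,t) = ∑_{X ∈ L(B)} μ(X) t^{dim X}` of a central
arrangement `B` in the ambient space `V`. -/
def cCharPoly (B : Finset (Submodule K V)) : Polynomial ℤ :=
  ∑ X ∈ LFinsetIn (⊤ : Submodule K V) B,
    Polynomial.C (posetMobius (LFinsetIn (⊤ : Submodule K V) B) X) *
      Polynomial.X ^ (finrank K ↥X)

/-- `H` is an affine hyperplane: nonempty, with hyperplane direction. -/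
def IsAffHyp (H : AffineSubspace K V) : Prop :=
  (H : Set V).Nonempty ∧ IsLinHyp H.direction

/-- The intersection poset (as a `Finset`) of a finite collection `B` of affine
subspaces, inside an ambient affine subspace `E`: all *nonempty* intersections of
subfamilies of `B` with `E` (the empty intersection giving `E`). -/
def aLFinset (E : AffineSubspace K V) (B : Finset (AffineSubspace K V)) :
    Finset (AffineSubspace K V) :=
  (B.powerset.image (fun s => (s.inf id) ⊓ E)).filter (fun X => (X : Set V).Nonempty)

/-- The `k`-th Betti number of an affine arrangement `B` with ambient affine space `E`. -/
def aBetti (E : AffineSubspace K V) (B : Finset (AffineSubspace K V)) (k : ℕ) : ℤ :=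
  (-1 : ℤ) ^ k *
    ∑ X ∈ (aLFinset E B).filter
        (fun X => finrank K E.direction - finrank K X.direction = k),
      posetMobius (aLFinset E B) X

/-- The affine hyperplane `{v | φ v = 1}`. -/
def levelOne (φ : V →ₗ[K] K) : AffineSubspace K V where
  carrier := {v | φ v = 1}
  smul_vsub_vadd_mem' := by
    intro c p1 p2 p3 h1 h2 h3
    simp only [Set.mem_setOf_eq] at *
    simp [vsub_eq_sub, vadd_eq_add, map_add, map_smul, map_sub, h1, h2, h3]

/-- The deconing `d_{H0}A`: the affine arrangement `{H ∩ {φ = 1} : H ∈ A \ {H0}}` in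
the affine hyperplane `H0' = {φ = 1}`, where `H0 = ker φ`. -/
def deconing (A : Finset (Submodule K V)) (H0 : Submodule K V) (φ : V →ₗ[K] K) :
    Finset (AffineSubspace K V) :=
  (A.erase H0).image (fun H => H.toAffineSubspace ⊓ levelOne φ)

/-- The underlying simple arrangement `A^{H0} = {H ∩ H0 : H ∈ A, H ≠ H0}` of the
Ziegler restriction: a collection of hyperplanes of `H0`. -/
def zieglerArr (A : Finset (Submodule K V)) (H0 : Submodule K V) :
    Finset (Submodule K V) :=
  (A.erase H0).image (fun H => H ⊓ H0)

/-- The Ziegler multiplicity `m^{H0}(X) = #{H ∈ A \ {H0} : H ∩ H0 = X}`. -/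
def zieglerMult (A : Finset (Submodule K V)) (H0 : Submodule K V)
    (X : Submodule K V) : ℕ :=
  ((A.erase H0).filter (fun H => H ⊓ H0 = X)).card

/-- The localization `A_X = {H ∈ A : H ⊇ X}`. -/
def locArr (A : Finset (Submodule K V)) (X : Submodule K V) :
    Finset (Submodule K V) :=
  A.filter (fun H => X ≤ H)

/-- The map `ρ : L(d_{H0}A) → L(A^{H0})`, sending an affine flat `X` to `KX ∩ H0`,
where `KX` is the linear span of `X`. -/
def rhoMap (H0 : Submodule K V) (X : AffineSubspace K V) : Submodule K V :=
  Submodule.span K (X : Set V) ⊓ H0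

/-- The rank-`k` (codimension computed inside `H0`) part of the intersection lattice
of the Ziegler restriction `A^{H0}`. -/
def restL (A : Finset (Submodule K V)) (H0 : Submodule K V) (k : ℕ) :
    Finset (Submodule K V) :=
  (LFinsetIn H0 (zieglerArr A H0)).filter
    (fun X : Submodule K V => finrank K ↥H0 - finrank K ↥X = k)

/-- The linear form `φ` on `K^n` as a degree-one polynomial `∑ φ(e_i)·x_i`. -/
def formPoly {n : ℕ} (φ : (Fin n → K) →ₗ[K] K) : MvPolynomial (Fin n) K :=
  ∑ i, MvPolynomial.C (φ (Pi.single i 1)) * MvPolynomial.X i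

/-- The module `D(B,m)` of logarithmic derivations of a multiarrangement in `K^n`:
derivations `θ` of `S = K[x_1,…,x_n]` such that `θ(α_H) ∈ (α_H^{m(H)})` for every
`H ∈ B` (for every defining linear form `α_H` of `H`). -/
def arrDeriv {n : ℕ} (B : Finset (Submodule K (Fin n → K)))
    (m : Submodule K (Fin n → K) → ℕ) :
    Submodule (MvPolynomial (Fin n) K)
      (Derivation K (MvPolynomial (Fin n) K) (MvPolynomial (Fin n) K)) where
  carrier := {θ | ∀ H ∈ B, ∀ φ : (Fin n → K) →ₗ[K] K, φ ≠ 0 → LinearMap.ker φ = H →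
    θ (formPoly φ) ∈ Ideal.span {formPoly φ ^ m H}}
  add_mem' := by
    intro a b ha hb H hH φ h0 hker
    simpa using add_mem (ha H hH φ h0 hker) (hb H hH φ h0 hker)
  zero_mem' := by
    intro H hH φ h0 hker
    simp
  smul_mem' := by
    intro c a ha H hH φ h0 hker
    simpa using Ideal.mul_mem_left _ c (ha H hH φ h0 hker)

/-- A derivation of `K[x_1,…,x_n]` is homogeneous of (polynomial) degree `d` if it
sends each variable to a homogeneous polynomial of degree `d`. -/
def derivHomog {n : ℕ}
    (θ : Derivation K (MvPolynomial (Fin n) K) (MvPolynomial (Fin n) K)) (d : ℕ) :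
    Prop :=
  ∀ i, (θ (MvPolynomial.X i)).IsHomogeneous d

/-- Freeness of a multiarrangement `(B, m)` in `K^n` with exponents `d`: `D(B,m)` has a
homogeneous basis of degrees `d 0, …, d (n-1)`. -/
def multiFreeExp {n : ℕ} (B : Finset (Submodule K (Fin n → K)))
    (m : Submodule K (Fin n → K) → ℕ) (d : Fin n → ℕ) : Prop :=
  ∃ b : Basis (Fin n) (MvPolynomial (Fin n) K) ↥(arrDeriv B m),
    ∀ i, derivHomog
      ((b i : Derivation K (MvPolynomial (Fin n) K) (MvPolynomial (Fin n) K))) (d i)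

/-- Freeness of a multiarrangement in `K^n`. -/
def multiFree {n : ℕ} (B : Finset (Submodule K (Fin n → K)))
    (m : Submodule K (Fin n → K) → ℕ) : Prop :=
  ∃ d, multiFreeExp B m d

/-- Freeness of a simple central arrangement `A` in `K^n`: freeness of `(A, m ≡ 1)`. -/
def arrFree {n : ℕ} (A : Finset (Submodule K (Fin n → K))) : Prop :=
  multiFree A (fun _ => 1)

/-- The Ziegler restriction `(A^{H0}, m^{H0})` is free with exponents `d`: for every
linear identification `e : H0 ≅ K^{ℓ-1}`, the transported multiarrangement (with the
transported Ziegler multiplicity) is free with exponents `d`. -/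
def zieglerFreeExp {ℓ : ℕ} (A : Finset (Submodule K (Fin ℓ → K)))
    (H0 : Submodule K (Fin ℓ → K)) (d : Fin (ℓ - 1) → ℕ) : Prop :=
  ∀ e : ↥H0 ≃ₗ[K] (Fin (ℓ - 1) → K),
    multiFreeExp
      ((zieglerArr A H0).image
        (fun Y => (Y.comap H0.subtype).map (e : ↥H0 →ₗ[K] (Fin (ℓ - 1) → K))))
      (fun Z => zieglerMult A H0
        ((Z.comap (e : ↥H0 →ₗ[K] (Fin (ℓ - 1) → K))).map H0.subtype))
      d

/-- Freeness of the Ziegler restriction `(A^{H0}, m^{H0})`. -/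
def zieglerFree {ℓ : ℕ} (A : Finset (Submodule K (Fin ℓ → K)))
    (H0 : Submodule K (Fin ℓ → K)) : Prop :=
  ∃ d, zieglerFreeExp A H0 d

/-- The exponent vector `(a, b, 0, …, 0)`. -/
def expVec {n : ℕ} (ab : ℕ × ℕ) : Fin n → ℕ :=
  fun i => if (i : ℕ) = 0 then ab.1 else if (i : ℕ) = 1 then ab.2 else 0

/- For a flat `Y` of the deconing `d_{H0}A`, i.e. a nonempty affine subspace of `{φ = 1}`, the
linear span meets `H0 = ker φ` exactly in the direction of `Y`, so `ρ Y` is the direction of `Y`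
and `ρ` preserves rank. The fibre of `ρ` over a rank-`k` flat `X` of `A^{H0}` therefore consists
of the rank-`k` flats of `d_{H0}A` whose direction contains `X`, which are precisely the rank-`k`
flats of `d_{H0}(A_X)`. Moreover every flat of `d_{H0}A` containing a flat of `d_{H0}(A_X)` is
again one of `d_{H0}(A_X)`, and the Möbius function at a flat only sees the flats containing it,
so the Möbius values agree on each fibre; summing over the fibres gives the Betti numbers. -/

lemma finset_inf_inf_const {ι α : Type*} [SemilatticeInf α] [OrderTop α] (s : Finset ι)
    (f : ι → α) (c : α) : s.inf (fun i => f i ⊓ c) ⊓ c = s.inf f ⊓ c := by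
  rw [show (fun i => f i ⊓ c) = f ⊓ fun _ => c from rfl, Finset.inf_inf, inf_assoc,
    inf_eq_right.mpr (Finset.le_inf fun _ _ => le_rfl)]

lemma mem_image_inf_powerset_image_inf {ι α : Type*} [SemilatticeInf α] [OrderTop α]
    (B : Finset ι) (f : ι → α) (c x : α) :
    x ∈ (B.image fun i => f i ⊓ c).powerset.image (fun s => s.inf id ⊓ c) ↔
      ∃ T ⊆ B, x = T.inf f ⊓ c := by
  simp only [Finset.mem_image, Finset.mem_powerset, Finset.subset_image_iff]
  constructor
  · rintro ⟨_, ⟨T, hT, rfl⟩, rfl⟩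
    exact ⟨T, hT, by rw [Finset.inf_image, Function.id_comp, finset_inf_inf_const]⟩
  · rintro ⟨T, hT, rfl⟩
    exact ⟨_, ⟨T, hT, rfl⟩, by rw [Finset.inf_image, Function.id_comp, finset_inf_inf_const]⟩

lemma le_of_mem_LFinsetIn {E X : Submodule K V} {B : Finset (Submodule K V)}
    (hX : X ∈ LFinsetIn E B) : X ≤ E := by
  obtain ⟨_, _, rfl⟩ := Finset.mem_image.mp hX
  exact inf_le_right

lemma le_of_mem_aLFinset {E X : AffineSubspace K V} {B : Finset (AffineSubspace K V)}
    (hX : X ∈ aLFinset E B) : X ≤ E := by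
  obtain ⟨_, _, rfl⟩ := Finset.mem_image.mp (Finset.mem_filter.mp hX).1
  exact inf_le_right

lemma nonempty_of_mem_aLFinset {E X : AffineSubspace K V} {B : Finset (AffineSubspace K V)}
    (hX : X ∈ aLFinset E B) : (X : Set V).Nonempty :=
  (Finset.mem_filter.mp hX).2

lemma toAffineSubspace_finset_inf {ι : Type*} (T : Finset ι) (f : ι → Submodule K V) :
    (T.inf f).toAffineSubspace = T.inf fun i => (f i).toAffineSubspace := by
  induction T using Finset.induction_on with
  | empty => ext; simp [Submodule.mem_toAffineSubspace]
  | insert _ _ _ ih =>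
    rw [Finset.inf_insert, Finset.inf_insert, ← ih]
    ext; simp [Submodule.mem_toAffineSubspace, AffineSubspace.mem_inf_iff]

lemma levelOne_eq_mk' {φ : V →ₗ[K] K} {p : V} (hp : p ∈ levelOne φ) :
    levelOne φ = AffineSubspace.mk' p (LinearMap.ker φ) := by
  have hp1 : φ p = 1 := hp
  ext v
  rw [AffineSubspace.mem_mk', vsub_eq_sub, LinearMap.mem_ker, map_sub, hp1, sub_eq_zero]
  rfl

lemma direction_levelOne_of_mem {φ : V →ₗ[K] K} {p : V} (hp : p ∈ levelOne φ) :
    (levelOne φ).direction = LinearMap.ker φ := by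
  rw [levelOne_eq_mk' hp, AffineSubspace.direction_mk']

lemma direction_toAffineSubspace_inf_levelOne {S : Submodule K V} {φ : V →ₗ[K] K}
    (hne : ((S.toAffineSubspace ⊓ levelOne φ : AffineSubspace K V) : Set V).Nonempty) :
    (S.toAffineSubspace ⊓ levelOne φ).direction = S ⊓ LinearMap.ker φ := by
  obtain ⟨p, hpS, hp⟩ := hne
  rw [AffineSubspace.direction_inf_of_mem hpS hp, Submodule.toAffineSubspace_direction,
    direction_levelOne_of_mem hp]

/-- A nonempty affine subspace `Y` of `{φ = 1}` spans `K p ⊕ Y.direction` for any `p ∈ Y`,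
and `φ` kills only the second summand. -/
lemma span_inf_ker_eq_direction {φ : V →ₗ[K] K} {Y : AffineSubspace K V}
    (hY : (Y : Set V).Nonempty) (hle : Y ≤ levelOne φ) :
    Submodule.span K (Y : Set V) ⊓ LinearMap.ker φ = Y.direction := by
  obtain ⟨p, hp⟩ := hY
  have hp1 : φ p = 1 := hle hp
  have hdir : Y.direction ≤ LinearMap.ker φ :=
    direction_levelOne_of_mem (hle hp) ▸ AffineSubspace.direction_le hle
  apply le_antisymm
  · have hspan : Submodule.span K (Y : Set V) ≤ (K ∙ p) ⊔ Y.direction := by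
      rw [Submodule.span_le]
      intro y hy
      rw [SetLike.mem_coe, ← sub_add_cancel y p, add_comm]
      exact Submodule.add_mem_sup (Submodule.mem_span_singleton_self p)
        (AffineSubspace.vsub_mem_direction hy hp)
    rintro x ⟨hxY, hxker⟩
    obtain ⟨_, ha, b, hb, rfl⟩ := Submodule.mem_sup.mp (hspan hxY)
    obtain ⟨c, rfl⟩ := Submodule.mem_span_singleton.mp ha
    have hc : c = 0 := by
      simpa [hp1, LinearMap.mem_ker.mp (hdir hb)] using LinearMap.mem_ker.mp hxker
    simpa [hc] using hb
  · intro v hv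
    obtain ⟨a, ha, b, hb, rfl⟩ := (AffineSubspace.mem_direction_iff_eq_vsub ⟨p, hp⟩ v).mp hv
    exact ⟨sub_mem (Submodule.subset_span ha) (Submodule.subset_span hb), hdir hv⟩

lemma rhoMap_eq_direction {H0 : Submodule K V} {φ : V →ₗ[K] K} (hker : LinearMap.ker φ = H0)
    {B : Finset (AffineSubspace K V)} {Y : AffineSubspace K V}
    (hY : Y ∈ aLFinset (levelOne φ) B) : rhoMap H0 Y = Y.direction := by
  rw [rhoMap, ← hker, span_inf_ker_eq_direction (nonempty_of_mem_aLFinset hY)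
    (le_of_mem_aLFinset hY)]

lemma direction_levelOne_of_mem_aLFinset {H0 : Submodule K V} {φ : V →ₗ[K] K}
    (hker : LinearMap.ker φ = H0) {B : Finset (AffineSubspace K V)} {Y : AffineSubspace K V}
    (hY : Y ∈ aLFinset (levelOne φ) B) : (levelOne φ).direction = H0 := by
  obtain ⟨p, hp⟩ := nonempty_of_mem_aLFinset hY
  rw [direction_levelOne_of_mem (le_of_mem_aLFinset hY hp), hker]

lemma mem_aLFinset_deconing {B : Finset (Submodule K V)} {H0 : Submodule K V}
    {φ : V →ₗ[K] K} {Y : AffineSubspace K V} :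
    Y ∈ aLFinset (levelOne φ) (deconing B H0 φ) ↔
      (Y : Set V).Nonempty ∧ ∃ T ⊆ B.erase H0, Y = (T.inf id).toAffineSubspace ⊓ levelOne φ := by
  rw [aLFinset, deconing, Finset.mem_filter, and_comm,
    mem_image_inf_powerset_image_inf (B.erase H0) Submodule.toAffineSubspace]
  simp only [toAffineSubspace_finset_inf, id]

lemma mem_LFinsetIn_zieglerArr {A : Finset (Submodule K V)} {H0 X : Submodule K V} :
    X ∈ LFinsetIn H0 (zieglerArr A H0) ↔ ∃ T ⊆ A.erase H0, X = T.inf id ⊓ H0 :=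
  mem_image_inf_powerset_image_inf (A.erase H0) id H0 X

lemma mem_aLFinset_deconing_locArr {A : Finset (Submodule K V)} {H0 X : Submodule K V}
    {φ : V →ₗ[K] K} (hker : LinearMap.ker φ = H0) (hX : X ≤ H0) {Y : AffineSubspace K V} :
    Y ∈ aLFinset (levelOne φ) (deconing (locArr A X) H0 φ) ↔
      Y ∈ aLFinset (levelOne φ) (deconing A H0 φ) ∧ X ≤ Y.direction := by
  have hsub : ∀ T : Finset (Submodule K V),
      T ⊆ (locArr A X).erase H0 ↔ T ⊆ A.erase H0 ∧ X ≤ T.inf id := by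
    intro T
    simp only [Finset.subset_iff, locArr, Finset.mem_erase, Finset.mem_filter, Finset.le_inf_iff,
      id]
    grind
  simp only [mem_aLFinset_deconing]
  constructor
  · rintro ⟨hne, T, hT, rfl⟩
    obtain ⟨hTA, hXT⟩ := (hsub T).mp hT
    refine ⟨⟨hne, T, hTA, rfl⟩, ?_⟩
    rw [direction_toAffineSubspace_inf_levelOne hne, hker]
    exact le_inf hXT hX
  · rintro ⟨⟨hne, T, hT, rfl⟩, hXY⟩
    rw [direction_toAffineSubspace_inf_levelOne hne] at hXY
    exact ⟨hne, T, (hsub T).mpr ⟨hT, hXY.trans inf_le_left⟩, rfl⟩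

lemma rhoMap_mem_restL {A : Finset (Submodule K V)} {H0 : Submodule K V} {φ : V →ₗ[K] K}
    (hker : LinearMap.ker φ = H0) {k : ℕ} {Y : AffineSubspace K V}
    (hY : Y ∈ (aLFinset (levelOne φ) (deconing A H0 φ)).filter
      (fun Y => finrank K (levelOne φ).direction - finrank K Y.direction = k)) :
    rhoMap H0 Y ∈ restL A H0 k := by
  obtain ⟨hYL, hcod⟩ := Finset.mem_filter.mp hY
  obtain ⟨hne, T, hT, rfl⟩ := mem_aLFinset_deconing.mp hYL
  rw [direction_levelOne_of_mem_aLFinset hker hYL] at hcod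
  rw [rhoMap_eq_direction hker hYL, restL, Finset.mem_filter, mem_LFinsetIn_zieglerArr]
  refine ⟨⟨T, hT, ?_⟩, hcod⟩
  rw [direction_toAffineSubspace_inf_levelOne hne, hker]

/-- Both sides consist of the rank-`k` flats `Y` of `d_{H0}A` with `X ≤ Y.direction`: as `X` has
rank `k` too, that inclusion is the equality `ρ Y = X`. -/
lemma filter_rhoMap_eq_filter_deconing_locArr [FiniteDimensional K V]
    {A : Finset (Submodule K V)} {H0 : Submodule K V} {φ : V →ₗ[K] K}
    (hker : LinearMap.ker φ = H0) {k : ℕ} {X : Submodule K V} (hX : X ∈ restL A H0 k) :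
    ((aLFinset (levelOne φ) (deconing A H0 φ)).filter
        (fun Y => finrank K (levelOne φ).direction - finrank K Y.direction = k)).filter
        (fun Y => rhoMap H0 Y = X) =
      (aLFinset (levelOne φ) (deconing (locArr A X) H0 φ)).filter
        (fun Y => finrank K (levelOne φ).direction - finrank K Y.direction = k) := by
  obtain ⟨hXL, hXcod⟩ := Finset.mem_filter.mp hX
  have hXH0 := le_of_mem_LFinsetIn hXL
  ext Y
  simp only [Finset.mem_filter, mem_aLFinset_deconing_locArr hker hXH0]
  constructor
  · rintro ⟨⟨hYL, hcod⟩, hρ⟩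
    exact ⟨⟨hYL, (rhoMap_eq_direction hker hYL ▸ hρ).ge⟩, hcod⟩
  · rintro ⟨⟨hYL, hXY⟩, hcod⟩
    refine ⟨⟨hYL, hcod⟩, ?_⟩
    have hEd := direction_levelOne_of_mem_aLFinset hker hYL
    have hYH0 : Y.direction ≤ H0 := hEd ▸ AffineSubspace.direction_le (le_of_mem_aLFinset hYL)
    have hYX := Submodule.finrank_mono hXY
    have hH0Y := Submodule.finrank_mono hYH0
    rw [hEd] at hcod
    rw [rhoMap_eq_direction hker hYL]
    exact (Submodule.eq_of_le_of_finrank_eq hXY (by omega)).symm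

lemma posetMobius_congr {α : Type*} [PartialOrder α] {L L' : Finset α} {x : α}
    (h : ∀ y, x < y → (y ∈ L ↔ y ∈ L')) : posetMobius L x = posetMobius L' x := by
  induction hn : (L.filter (x < ·)).card using Nat.strong_induction_on generalizing x with
  | _ n ih =>
  have hup : L.filter (x < ·) = L'.filter (x < ·) := by
    ext y
    simp only [Finset.mem_filter]
    exact ⟨fun ⟨hy, hxy⟩ => ⟨(h y hxy).mp hy, hxy⟩, fun ⟨hy, hxy⟩ => ⟨(h y hxy).mpr hy, hxy⟩⟩
  rw [posetMobius, posetMobius, hup]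
  congr 2
  refine Finset.sum_congr rfl fun y _ => ?_
  obtain ⟨hyL', hxy⟩ := Finset.mem_filter.mp y.2
  have hyL := (h _ hxy).mpr hyL'
  refine ih _ ?_ (fun z hyz => h z (hxy.trans hyz)) rfl
  rw [← hn]
  refine Finset.card_lt_card ⟨Finset.monotone_filter_right _ fun z _ hyz => hxy.trans hyz, ?_⟩
  intro hsub
  exact lt_irrefl _ (Finset.mem_filter.mp (hsub (Finset.mem_filter.mpr ⟨hyL, hxy⟩))).2

theorem betti_deconing_eq_sum_fibers_general
    {K : Type*} [Field K] (ℓ : ℕ)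
    (A : Finset (Submodule K (Fin ℓ → K)))
    (H0 : Submodule K (Fin ℓ → K))
    (φ : (Fin ℓ → K) →ₗ[K] K) (hker : LinearMap.ker φ = H0) (k : ℕ) :
    ((aLFinset (levelOne φ) (deconing A H0 φ)).filter
        (fun Y => finrank K (levelOne φ).direction - finrank K Y.direction = k) =
      (restL A H0 k).biUnion
        (fun X => (aLFinset (levelOne φ) (deconing A H0 φ)).filter
          (fun Y => (finrank K (levelOne φ).direction - finrank K Y.direction = k) ∧
            rhoMap H0 Y = X))) ∧
    aBetti (levelOne φ) (deconing A H0 φ) k =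
      ∑ X ∈ restL A H0 k, aBetti (levelOne φ) (deconing (locArr A X) H0 φ) k := by
  refine ⟨?_, ?_⟩
  · simp_rw [← Finset.filter_filter]
    exact (Finset.biUnion_filter_eq_of_maps_to fun _ => rhoMap_mem_restL hker).symm
  · rw [aBetti, ← Finset.sum_fiberwise_of_maps_to fun _ => rhoMap_mem_restL hker, Finset.mul_sum]
    refine Finset.sum_congr rfl fun X hX => ?_
    rw [aBetti, filter_rhoMap_eq_filter_deconing_locArr hker hX]
    have hXH0 := le_of_mem_LFinsetIn (Finset.mem_filter.mp hX).1
    refine congrArg _ (Finset.sum_congr rfl fun Y hY => posetMobius_congr fun Z hYZ => ?_)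
    obtain ⟨hYL, hXY⟩ :=
      (mem_aLFinset_deconing_locArr hker hXH0).mp (Finset.mem_filter.mp hY).1
    rw [mem_aLFinset_deconing_locArr hker hXH0,
      and_iff_left (hXY.trans (AffineSubspace.direction_le hYZ.le))]

/-- `L_k(d_{H0}A)` is the disjoint union of the fibers `ρ⁻¹(X)`,
`X ∈ L_k(A^{H0})`; consequently `b_k(d_{H0}A) = ∑_{X ∈ L_k(A^{H0})} b_k(d_{H0}(A_X))`. -/
theorem betti_deconing_eq_sum_fibers
    {K : Type*} [Field K] (ℓ : ℕ)
    (A : Finset (Submodule K (Fin ℓ → K))) (hA : ∀ H ∈ A, IsLinHyp H)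
    (H0 : Submodule K (Fin ℓ → K)) (hH0 : H0 ∈ A)
    (φ : (Fin ℓ → K) →ₗ[K] K) (hφ : φ ≠ 0) (hker : LinearMap.ker φ = H0) (k : ℕ) :
    ((aLFinset (levelOne φ) (deconing A H0 φ)).filter
        (fun Y => finrank K (levelOne φ).direction - finrank K Y.direction = k) =
      (restL A H0 k).biUnion
        (fun X => (aLFinset (levelOne φ) (deconing A H0 φ)).filter
          (fun Y => (finrank K (levelOne φ).direction - finrank K Y.direction = k) ∧
            rhoMap H0 Y = X))) ∧
    aBetti (levelOne φ) (deconing A H0 φ) k =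
      ∑ X ∈ restL A H0 k, aBetti (levelOne φ) (deconing (locArr A X) H0 φ) k :=
  betti_deconing_eq_sum_fibers_general ℓ A H0 φ hker k

end ArrPaper
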